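/- arXiv:1903.02693 — 4 statements merged into one kernel-verified Lean document; each statement's English description precedes it below -/
import Mathlib

section
/- Let d ≥ 1, θ > 0 and M ≥ 0. Let u, v : ℝᵈ → ℝ be Lebesgue integrable, let J : ℝᵈ → [0,∞) be measurable, vanishing outside the closed ball of radius θ centered at the origin, with ∫_{ℝᵈ} J = 1, and let η : ℝ → ℝ be measurable with η(r) ≥ max(r,0) for all r. Assume that ∫_{ℝᵈ} max(u(x+h) − u(x), 0) dx ≤ M for every h ∈ ℝᵈ with ‖h‖ ≤ θ. Then ∫_{ℝᵈ} max(v(x) − u(x), 0) dx ≤ ∫_{ℝᵈ}∫_{ℝᵈ} η(v(y) − u(x)) J(y − x) dy dx + M, where the double integral is allowed to be +∞. -/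
open MeasureTheory

/-!
Since `J` has mass one, `∫ (v - u)₊ = ∫∫ (v (x + h) - u (x + h))₊ J h dh dx` by Tonelli and
translation invariance. Inserting `u x` gives the pointwise bound
`(v (x + h) - u (x + h))₊ ≤ (v (x + h) - u x)₊ + (u x - u (x + h))₊`. After the substitution
`y = x + h` the first term is at most the `η`-functional, because `η r ≥ r₊`; integrating the
second term first in `x` gives the L¹ modulus of `u` at the shift `-h`, at most `M` on the
support of `J`, so its double integral is at most `M ∫ J = M`.
-/

section Tonelli

open Function ENNReal

variable {α β : Type*} [MeasurableSpace α] [MeasurableSpace β] {μ : Measure α} {ν : Measure β}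

theorem ofReal_integral_max_zero {f : α → ℝ} (hf : Integrable f μ) :
    ENNReal.ofReal (∫ x, max (f x) 0 ∂μ) = ∫⁻ x, ENNReal.ofReal (f x) ∂μ := by
  rw [ofReal_integral_eq_lintegral_ofReal hf.pos_part (ae_of_all _ fun _ => le_max_right _ _)]
  simp only [ofReal_max, ofReal_zero, max_zero]

variable [SFinite ν]

theorem lintegral_lintegral_le_add {f g k : α → β → ℝ≥0∞}
    (hg : AEMeasurable (uncurry g) (μ.prod ν)) (hk : AEMeasurable (uncurry k) (μ.prod ν))
    (hf : ∀ x y, f x y ≤ g x y + k x y) :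
    ∫⁻ x, ∫⁻ y, f x y ∂ν ∂μ ≤ ∫⁻ x, ∫⁻ y, g x y ∂ν ∂μ + ∫⁻ x, ∫⁻ y, k x y ∂ν ∂μ :=
  calc ∫⁻ x, ∫⁻ y, f x y ∂ν ∂μ ≤ ∫⁻ x, ∫⁻ y, g x y + k x y ∂ν ∂μ :=
        lintegral_mono fun x => lintegral_mono fun y => hf x y
    _ = _ := (lintegral_lintegral (hg.add hk)).trans <| (lintegral_add_left' hg _).trans <|
        congrArg₂ (· + ·) (lintegral_lintegral hg).symm (lintegral_lintegral hk).symm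

variable [SFinite μ]

theorem lintegral_lintegral_mul_right_swap {g : α → β → ℝ≥0∞}
    (hg : AEMeasurable (uncurry g) (μ.prod ν)) {j : β → ℝ≥0∞} (hj : AEMeasurable j ν)
    (hj_fin : ∀ y, j y ≠ ∞) :
    ∫⁻ x, ∫⁻ y, g x y * j y ∂ν ∂μ = ∫⁻ y, (∫⁻ x, g x y ∂μ) * j y ∂ν := by
  rw [lintegral_lintegral_swap
    (hg.mul (hj.comp_quasiMeasurePreserving Measure.quasiMeasurePreserving_snd))]
  exact lintegral_congr fun y => lintegral_mul_const' _ _ (hj_fin y)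

theorem lintegral_lintegral_mul_le {g : α → β → ℝ≥0∞}
    (hg : AEMeasurable (uncurry g) (μ.prod ν)) {j : β → ℝ≥0∞} (hj : AEMeasurable j ν)
    (hj_fin : ∀ y, j y ≠ ∞) {m : ℝ≥0∞} (hm : ∀ y, j y ≠ 0 → ∫⁻ x, g x y ∂μ ≤ m) :
    ∫⁻ x, ∫⁻ y, g x y * j y ∂ν ∂μ ≤ m * ∫⁻ y, j y ∂ν := by
  rw [lintegral_lintegral_mul_right_swap hg hj hj_fin, ← lintegral_const_mul'' m hj]
  refine lintegral_mono fun y => ?_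
  rcases eq_or_ne (j y) 0 with hy | hy
  · simp [hy]
  · exact mul_le_mul_left (hm y hy) _

end Tonelli

section Group

open ENNReal

variable {G : Type*} [AddCommGroup G] [MeasurableSpace G] [MeasurableAdd₂ G] {μ : Measure G}
  [μ.IsAddLeftInvariant]

theorem lintegral_ofReal_sub_comp_add {u : G → ℝ} (hu : Integrable u μ) (h : G) :
    ∫⁻ x, ENNReal.ofReal (u x - u (x + h)) ∂μ =
      ENNReal.ofReal (∫ x, max (u (x + -h) - u x) 0 ∂μ) := by
  rw [ofReal_integral_max_zero (f := fun x => u (x + -h) - u x) ((hu.comp_add_right (-h)).sub hu)]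
  conv_rhs => rw [← lintegral_add_right_eq_self _ h]
  simp only [add_neg_cancel_right]

variable [SFinite μ]

theorem lintegral_lintegral_comp_add_mul {f : G → ℝ≥0∞} (hf : AEMeasurable f μ)
    {j : G → ℝ≥0∞} (hj : AEMeasurable j μ) (hj_fin : ∀ y, j y ≠ ∞) :
    ∫⁻ x, ∫⁻ h, f (x + h) * j h ∂μ ∂μ = (∫⁻ x, f x ∂μ) * ∫⁻ h, j h ∂μ := by
  rw [lintegral_lintegral_mul_right_swap (g := fun x h => f (x + h)) (by fun_prop) hj hj_fin]
  simp_rw [lintegral_add_right_eq_self f]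
  exact lintegral_const_mul'' _ hj

theorem lintegral_ofReal_sub_le_add {u v : G → ℝ} (hu : AEMeasurable u μ) (hv : AEMeasurable v μ)
    {j : G → ℝ≥0∞} (hj : AEMeasurable j μ) (hj_fin : ∀ y, j y ≠ ∞) (hj1 : ∫⁻ h, j h ∂μ = 1)
    {m : ℝ≥0∞} (hmod : ∀ h, j h ≠ 0 → ∫⁻ x, ENNReal.ofReal (u x - u (x + h)) ∂μ ≤ m) :
    ∫⁻ x, ENNReal.ofReal (v x - u x) ∂μ ≤
      ∫⁻ x, ∫⁻ y, ENNReal.ofReal (v y - u x) * j (y - x) ∂μ ∂μ + m := by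
  calc ∫⁻ x, ENNReal.ofReal (v x - u x) ∂μ
      = ∫⁻ x, ∫⁻ h, ENNReal.ofReal (v (x + h) - u (x + h)) * j h ∂μ ∂μ := by
        rw [lintegral_lintegral_comp_add_mul (f := fun x => ENNReal.ofReal (v x - u x))
          (by fun_prop) hj hj_fin, hj1, mul_one]
    _ ≤ ∫⁻ x, ∫⁻ h, ENNReal.ofReal (v (x + h) - u x) * j h ∂μ ∂μ
          + ∫⁻ x, ∫⁻ h, ENNReal.ofReal (u x - u (x + h)) * j h ∂μ ∂μ := by
        refine lintegral_lintegral_le_add (by fun_prop) (by fun_prop) fun x h => ?_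
        rw [← add_mul]
        gcongr
        calc ENNReal.ofReal (v (x + h) - u (x + h))
            = ENNReal.ofReal ((v (x + h) - u x) + (u x - u (x + h))) := by ring_nf
          _ ≤ _ := ofReal_add_le
    _ ≤ ∫⁻ x, ∫⁻ y, ENNReal.ofReal (v y - u x) * j (y - x) ∂μ ∂μ + m := by
        gcongr ?_ + ?_
        · refine le_of_eq (lintegral_congr fun x => ?_)
          conv_rhs => rw [← lintegral_add_left_eq_self _ x]
          simp only [add_sub_cancel_left]
        · simpa [hj1] using lintegral_lintegral_mul_le (by fun_prop) hj hj_fin hmod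

end Group

theorem stmt4_general (d : ℕ) (θ M : ℝ)
    (u v : EuclideanSpace ℝ (Fin d) → ℝ)
    (hu : Integrable u) (hv : Integrable v)
    (J : EuclideanSpace ℝ (Fin d) → ℝ) (hJm : Measurable J)
    (hJ0 : ∀ x, 0 ≤ J x)
    (hJsupp : ∀ x, x ∉ Metric.closedBall (0 : EuclideanSpace ℝ (Fin d)) θ → J x = 0)
    (hJ1 : ∫ x, J x = 1)
    (η : ℝ → ℝ) (hη : ∀ r : ℝ, max r 0 ≤ η r)
    (hmod : ∀ h : EuclideanSpace ℝ (Fin d), ‖h‖ ≤ θ →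
      ∫ x, max (u (x + h) - u x) 0 ≤ M) :
    ENNReal.ofReal (∫ x, max (v x - u x) 0) ≤
      (∫⁻ x, ∫⁻ y, ENNReal.ofReal (η (v y - u x) * J (y - x))) +
        ENNReal.ofReal M := by
  have hj1 : ∫⁻ x, ENNReal.ofReal (J x) = 1 := by
    rw [← ofReal_integral_eq_lintegral_ofReal (.of_integral_ne_zero (by simp [hJ1]))
      (ae_of_all _ hJ0), hJ1, ENNReal.ofReal_one]
  have hmod' (h) (hJh : ENNReal.ofReal (J h) ≠ 0) :
      ∫⁻ x, ENNReal.ofReal (u x - u (x + h)) ≤ ENNReal.ofReal M := by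
    rw [lintegral_ofReal_sub_comp_add hu h]
    refine ENNReal.ofReal_le_ofReal (hmod (-h) ?_)
    by_contra hh
    exact hJh (by rw [hJsupp h (by simpa using hh), ENNReal.ofReal_zero])
  calc ENNReal.ofReal (∫ x, max (v x - u x) 0)
      = ∫⁻ x, ENNReal.ofReal (v x - u x) := ofReal_integral_max_zero (hv.sub hu)
    _ ≤ (∫⁻ x, ∫⁻ y, ENNReal.ofReal (v y - u x) * ENNReal.ofReal (J (y - x))) +
          ENNReal.ofReal M :=
        lintegral_ofReal_sub_le_add hu.aemeasurable hv.aemeasurable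
          hJm.ennreal_ofReal.aemeasurable (fun _ => ENNReal.ofReal_ne_top) hj1 hmod'
    _ ≤ _ := by
        gcongr with x y
        have hη₀ : 0 ≤ η (v y - u x) := (le_max_right _ _).trans (hη _)
        rw [ENNReal.ofReal_mul hη₀]
        gcongr
        exact (le_max_left _ _).trans (hη _)

/-- Deterministic core of the mollification-term estimate (Proposition 3.2(iv)):
if the L¹ modulus of continuity of `u` on scale `θ` is at most `M`, and `η`
dominates the positive part, then `∫ (v - u)_+` is dominated by the
doubled-variable regularized functional plus `M`; the double integral is
interpreted as a Lebesgue integral with values in `[0,∞]`. -/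
theorem stmt4 (d : ℕ) (hd : 1 ≤ d) (θ M : ℝ) (hθ : 0 < θ) (hM : 0 ≤ M)
    (u v : EuclideanSpace ℝ (Fin d) → ℝ)
    (hu : Integrable u) (hv : Integrable v)
    (J : EuclideanSpace ℝ (Fin d) → ℝ) (hJm : Measurable J)
    (hJ0 : ∀ x, 0 ≤ J x)
    (hJsupp : ∀ x, x ∉ Metric.closedBall (0 : EuclideanSpace ℝ (Fin d)) θ → J x = 0)
    (hJ1 : ∫ x, J x = 1)
    (η : ℝ → ℝ) (hηm : Measurable η) (hη : ∀ r : ℝ, max r 0 ≤ η r)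
    (hmod : ∀ h : EuclideanSpace ℝ (Fin d), ‖h‖ ≤ θ →
      ∫ x, max (u (x + h) - u x) 0 ≤ M) :
    ENNReal.ofReal (∫ x, max (v x - u x) 0) ≤
      (∫⁻ x, ∫⁻ y, ENNReal.ofReal (η (v y - u x) * J (y - x))) +
        ENNReal.ofReal M :=
  stmt4_general d θ M u v hu hv J hJm hJ0 hJsupp hJ1 η hη hmod
end

section
/- Let d ≥ 1, κ > 0, C ≥ 0. Let J : ℝᵈ → [0,∞) be measurable, vanishing outside the closed unit ball, with ∫_{ℝᵈ} J = 1, and for θ > 0 set J_θ(x) := θ^{−d} J(x/θ). Let u : ℝᵈ → ℝ be Lebesgue integrable and suppose that ∫_{ℝᵈ} max(u(x+z) − u(x), 0) dx ≤ C‖z‖^κ for every z ∈ ℝᵈ. Then for every h ∈ ℝᵈ with h ≠ 0, ∫_{ℝᵈ}∫_{ℝᵈ} max(u(y+h) − u(x), 0) J_{‖h‖}(y − x) dy dx ≤ 2C‖h‖^κ. -/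
/-!
With `y = x + z`, the doubled-variable integral is the `J_θ`-average over `z` of the one-sided
translation modulus `ω(z + h)`, where `ω(z) = ∫ (u(x + z) - u(x))⁺ dx`. Since the positive part is
subadditive and Lebesgue measure is translation invariant, `ω(z + h) ≤ ω(z) + ω(h)`, and on the
support of `J_θ` (`θ = ‖h‖`) both terms are at most `C‖h‖^κ`. As `J_θ` has mass one, the average
is at most `2C‖h‖^κ`.
-/

open MeasureTheory ENNReal

section Increment

variable {G : Type*} [AddCommGroup G] [MeasurableSpace G]

noncomputable def posIncrement (μ : Measure G) (u : G → ℝ) (z : G) : ℝ≥0∞ :=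
  ∫⁻ x, ENNReal.ofReal (u (x + z) - u x) ∂μ

theorem lintegral_lintegral_max_sub_mul_eq [MeasurableAdd₂ G] {μ : Measure G} [SFinite μ]
    [μ.IsAddLeftInvariant] {u W : G → ℝ} (hu : AEMeasurable u μ) (hW : AEMeasurable W μ) (h : G) :
    ∫⁻ x, ∫⁻ y, ENNReal.ofReal (max (u (y + h) - u x) 0 * W (y - x)) ∂μ ∂μ =
      ∫⁻ z, ENNReal.ofReal (W z) * posIncrement μ u (z + h) ∂μ := by
  have hmeas : AEMeasurable (fun p : G × G =>
      ENNReal.ofReal (W p.2) * ENNReal.ofReal (u (p.1 + p.2 + h) - u p.1)) (μ.prod μ) := by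
    have huh : AEMeasurable (fun x => u (x + h)) μ :=
      hu.comp_quasiMeasurePreserving (measurePreserving_add_right μ h).quasiMeasurePreserving
    exact hW.comp_snd.ennreal_ofReal.mul
      ((huh.comp_quasiMeasurePreserving (quasiMeasurePreserving_add μ μ)).sub
        hu.comp_fst).ennreal_ofReal
  calc ∫⁻ x, ∫⁻ y, ENNReal.ofReal (max (u (y + h) - u x) 0 * W (y - x)) ∂μ ∂μ
      = ∫⁻ x, ∫⁻ z, ENNReal.ofReal (W z) * ENNReal.ofReal (u (x + z + h) - u x) ∂μ ∂μ := by
        refine lintegral_congr fun x => ?_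
        rw [← lintegral_add_right_eq_self _ x]
        refine lintegral_congr fun z => ?_
        rw [ENNReal.ofReal_mul (le_max_right _ _), add_sub_cancel_right, mul_comm, add_comm z x]
        simp
    _ = ∫⁻ z, ∫⁻ x, ENNReal.ofReal (W z) * ENNReal.ofReal (u (x + z + h) - u x) ∂μ ∂μ :=
        lintegral_lintegral_swap hmeas
    _ = ∫⁻ z, ENNReal.ofReal (W z) * posIncrement μ u (z + h) ∂μ := by
        refine lintegral_congr fun z => ?_
        simp only [posIncrement, add_assoc]
        exact lintegral_const_mul' _ _ ENNReal.ofReal_ne_top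

variable [MeasurableAdd G] {μ : Measure G} [μ.IsAddRightInvariant] {u : G → ℝ}

theorem posIncrement_add_le (hu : AEMeasurable u μ) (a b : G) :
    posIncrement μ u (a + b) ≤ posIncrement μ u a + posIncrement μ u b := by
  have hua : AEMeasurable (fun x => u (x + a)) μ :=
    hu.comp_quasiMeasurePreserving (measurePreserving_add_right μ a).quasiMeasurePreserving
  have hinc : AEMeasurable (fun x => ENNReal.ofReal (u (x + a) - u x)) μ :=
    (hua.sub hu).ennreal_ofReal
  calc posIncrement μ u (a + b)
      ≤ ∫⁻ x, ENNReal.ofReal (u (x + a + b) - u (x + a)) + ENNReal.ofReal (u (x + a) - u x) ∂μ := by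
        refine lintegral_mono fun x => ?_
        rw [← add_assoc]
        exact (ENNReal.ofReal_le_ofReal (by linarith)).trans ENNReal.ofReal_add_le
    _ = posIncrement μ u b + posIncrement μ u a := by
        rw [lintegral_add_right' _ hinc,
          lintegral_add_right_eq_self (fun x => ENNReal.ofReal (u (x + b) - u x)) a]
        rfl
    _ = _ := add_comm _ _

theorem posIncrement_eq_ofReal_integral (hu : Integrable u μ) (z : G) :
    posIncrement μ u z = ENNReal.ofReal (∫ x, max (u (x + z) - u x) 0 ∂μ) := by
  have hint : Integrable (fun x => max (u (x + z) - u x) 0) μ :=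
    ((hu.comp_add_right z).sub hu).pos_part
  rw [ofReal_integral_eq_lintegral_ofReal hint (.of_forall fun _ => le_max_right _ _)]
  simp [posIncrement]

end Increment

theorem posIncrement_add_le_two_mul {E : Type*} [NormedAddCommGroup E] [MeasurableSpace E]
    [MeasurableAdd E] {μ : Measure E} [μ.IsAddRightInvariant] {u : E → ℝ} {κ C : ℝ}
    (hu : AEMeasurable u μ) (hκ : 0 ≤ κ) (hC : 0 ≤ C)
    (hmod : ∀ z, posIncrement μ u z ≤ ENNReal.ofReal (C * ‖z‖ ^ κ)) {z h : E} (hz : ‖z‖ ≤ ‖h‖) :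
    posIncrement μ u (z + h) ≤ ENNReal.ofReal (2 * C * ‖h‖ ^ κ) :=
  calc posIncrement μ u (z + h)
      ≤ ENNReal.ofReal (C * ‖z‖ ^ κ) + ENNReal.ofReal (C * ‖h‖ ^ κ) :=
        (posIncrement_add_le hu z h).trans (add_le_add (hmod z) (hmod h))
    _ ≤ ENNReal.ofReal (C * ‖h‖ ^ κ) + ENNReal.ofReal (C * ‖h‖ ^ κ) := by
        gcongr
    _ = ENNReal.ofReal (2 * C * ‖h‖ ^ κ) := by
        rw [← ENNReal.ofReal_add (by positivity) (by positivity)]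
        ring_nf

section Kernel

variable {E : Type*} [NormedAddCommGroup E] [NormedSpace ℝ E] {J : E → ℝ} {θ : ℝ}

theorem comp_inv_smul_eq_zero_of_lt_norm (hJ : ∀ x, x ∉ Metric.closedBall (0 : E) 1 → J x = 0)
    (hθ : 0 < θ) {z : E} (hz : θ < ‖z‖) : J (θ⁻¹ • z) = 0 := by
  refine hJ _ ?_
  rw [Metric.mem_closedBall, dist_zero_right, norm_smul, norm_inv, Real.norm_of_nonneg hθ.le,
    inv_mul_le_iff₀ hθ, mul_one, not_le]
  exact hz

theorem lintegral_ofReal_rescale_eq_one [FiniteDimensional ℝ E] [MeasurableSpace E]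
    [BorelSpace E] (μ : Measure E) [μ.IsAddHaarMeasure] (hJ0 : ∀ x, 0 ≤ J x)
    (hJ1 : ∫ x, J x ∂μ = 1) (hθ : 0 < θ) :
    ∫⁻ z, ENNReal.ofReal ((θ ^ Module.finrank ℝ E)⁻¹ * J (θ⁻¹ • z)) ∂μ = 1 := by
  have hJ : Integrable J μ := .of_integral_ne_zero (by simp [hJ1])
  rw [← ofReal_integral_eq_lintegral_ofReal ((hJ.comp_smul (inv_ne_zero hθ.ne')).const_mul _)
    (.of_forall fun z => mul_nonneg (by positivity) (hJ0 _)), integral_const_mul,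
    Measure.integral_comp_inv_smul_of_nonneg μ J hθ.le, hJ1, smul_eq_mul, mul_one,
    inv_mul_cancel₀ (by positivity), ENNReal.ofReal_one]

end Kernel

theorem stmt6_general (d : ℕ) (κ C : ℝ) (hκ : 0 < κ) (hC : 0 ≤ C)
    (J : EuclideanSpace ℝ (Fin d) → ℝ)
    (hJ0 : ∀ x, 0 ≤ J x)
    (hJsupp : ∀ x, x ∉ Metric.closedBall (0 : EuclideanSpace ℝ (Fin d)) 1 → J x = 0)
    (hJ1 : ∫ x, J x = 1)
    (u : EuclideanSpace ℝ (Fin d) → ℝ) (hu : Integrable u)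
    (hmod : ∀ z : EuclideanSpace ℝ (Fin d),
      ∫ x, max (u (x + z) - u x) 0 ≤ C * ‖z‖ ^ κ)
    (h : EuclideanSpace ℝ (Fin d)) (hh : h ≠ 0) :
    (∫⁻ x, ∫⁻ y, ENNReal.ofReal
        (max (u (y + h) - u x) 0 * ((‖h‖ ^ d)⁻¹ * J (‖h‖⁻¹ • (y - x))))) ≤
      ENNReal.ofReal (2 * C * ‖h‖ ^ κ) := by
  have hθ : 0 < ‖h‖ := norm_pos_iff.2 hh
  have hmass := lintegral_ofReal_rescale_eq_one volume hJ0 hJ1 hθ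
  rw [finrank_euclideanSpace_fin] at hmass
  have hW : AEMeasurable (fun z => (‖h‖ ^ d)⁻¹ * J (‖h‖⁻¹ • z)) :=
    (((Integrable.of_integral_ne_zero (by simp [hJ1])).comp_smul
      (inv_ne_zero hθ.ne')).const_mul _).aemeasurable
  have hmod' (z) : posIncrement volume u z ≤ ENNReal.ofReal (C * ‖z‖ ^ κ) :=
    (posIncrement_eq_ofReal_integral hu z).trans_le (ENNReal.ofReal_le_ofReal (hmod z))
  refine (lintegral_lintegral_max_sub_mul_eq hu.aemeasurable hW h).trans_le ?_
  calc ∫⁻ z, ENNReal.ofReal ((‖h‖ ^ d)⁻¹ * J (‖h‖⁻¹ • z)) * posIncrement volume u (z + h)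
      ≤ ∫⁻ z, ENNReal.ofReal ((‖h‖ ^ d)⁻¹ * J (‖h‖⁻¹ • z)) * ENNReal.ofReal (2 * C * ‖h‖ ^ κ) := by
        refine lintegral_mono fun z => ?_
        rcases le_or_gt ‖z‖ ‖h‖ with hz | hz
        · gcongr
          exact posIncrement_add_le_two_mul hu.aemeasurable hκ.le hC hmod' hz
        · simp [comp_inv_smul_eq_zero_of_lt_norm hJsupp hθ hz]
    _ = ENNReal.ofReal (2 * C * ‖h‖ ^ κ) := by
        rw [lintegral_mul_const' _ _ ENNReal.ofReal_ne_top, hmass, one_mul]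

/-- One direction of the equivalence at the end of Theorem 5.1: if `u` satisfies
the translation form of the fractional BV (Nikolskii) bound with exponent `κ`,
then the mollified doubled-variable form holds with constant `2C`, where
`J_θ(x) = θ^{-d} J(x/θ)` and `θ = ‖h‖`. -/
theorem stmt6 (d : ℕ) (hd : 1 ≤ d) (κ C : ℝ) (hκ : 0 < κ) (hC : 0 ≤ C)
    (J : EuclideanSpace ℝ (Fin d) → ℝ) (hJm : Measurable J)
    (hJ0 : ∀ x, 0 ≤ J x)
    (hJsupp : ∀ x, x ∉ Metric.closedBall (0 : EuclideanSpace ℝ (Fin d)) 1 → J x = 0)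
    (hJ1 : ∫ x, J x = 1)
    (u : EuclideanSpace ℝ (Fin d) → ℝ) (hu : Integrable u)
    (hmod : ∀ z : EuclideanSpace ℝ (Fin d),
      ∫ x, max (u (x + z) - u x) 0 ≤ C * ‖z‖ ^ κ)
    (h : EuclideanSpace ℝ (Fin d)) (hh : h ≠ 0) :
    (∫⁻ x, ∫⁻ y, ENNReal.ofReal
        (max (u (y + h) - u x) 0 * ((‖h‖ ^ d)⁻¹ * J (‖h‖⁻¹ • (y - x))))) ≤
      ENNReal.ofReal (2 * C * ‖h‖ ^ κ) :=
  stmt6_general d κ C hκ hC J hJ0 hJsupp hJ1 u hu hmod h hh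
end

section
/- Let d ≥ 1, θ > 0, C ≥ 0. Let J : ℝᵈ → [0,∞) be measurable and even (J(−x) = J(x) for all x), vanishing outside the closed ball of radius θ centered at the origin, with ∫_{ℝᵈ} J = 1. Let u : ℝᵈ → ℝ be Lebesgue integrable and suppose that ∫_{ℝᵈ}∫_{ℝᵈ} max(u(y+z) − u(x), 0) J(y − x) dy dx ≤ C for every z ∈ ℝᵈ with ‖z‖ ≤ θ. Then ∫_{ℝᵈ} max(u(x+h) − u(x), 0) dx ≤ 2C for every h ∈ ℝᵈ with ‖h‖ ≤ θ. -/
/-!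
Since `∫ J (y - x) dy = 1`, the translation integral equals its mollified version
`∫∫ (u (x + h) - u x)⁺ J (y - x) dy dx`. Splitting the increment at the intermediate
point `y`, `(u (x + h) - u x)⁺ ≤ (u (x + h) - u y)⁺ + (u y - u x)⁺`, bounds it by two
doubled-variable integrals: the second is the hypothesis at the shift `0`, and the first,
after exchanging `x` and `y` and using that `J` is even, is the hypothesis at the shift `h`.
-/

open MeasureTheory
open scoped ENNReal

lemma max_sub_zero_le_add (a b c : ℝ) : max (a - c) 0 ≤ max (a - b) 0 + max (b - c) 0 :=
  max_le (by linarith [le_max_left (a - b) 0, le_max_left (b - c) 0])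
    (add_nonneg (le_max_right _ _) (le_max_right _ _))

section Mollifier

variable {G : Type*} [MeasurableSpace G] [AddGroup G] {μ : Measure G}

noncomputable def mollifiedIncrement (μ : Measure G) (J u : G → ℝ) (z : G) : ℝ≥0∞ :=
  ∫⁻ x, ∫⁻ y, ENNReal.ofReal (max (u (y + z) - u x) 0 * J (y - x)) ∂μ ∂μ

lemma lintegral_ofReal_mul_comp_sub_right [MeasurableAdd G] [μ.IsAddRightInvariant] {J : G → ℝ}
    (hJ1 : ∫⁻ x, ENNReal.ofReal (J x) ∂μ = 1) {a : ℝ} (ha : 0 ≤ a) (x : G) :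
    ∫⁻ y, ENNReal.ofReal (a * J (y - x)) ∂μ = ENNReal.ofReal a := by
  simp_rw [ENNReal.ofReal_mul ha]
  rw [lintegral_const_mul' _ _ ENNReal.ofReal_ne_top,
    lintegral_sub_right_eq_self (fun y => ENNReal.ofReal (J y)) x, hJ1, mul_one]

lemma ofReal_mul_le_add_of_le {a b c k : ℝ} (hb : 0 ≤ b) (hc : 0 ≤ c) (hk : 0 ≤ k)
    (habc : a ≤ b + c) :
    ENNReal.ofReal (a * k) ≤ ENNReal.ofReal (b * k) + ENNReal.ofReal (c * k) := by
  rw [← ENNReal.ofReal_add (mul_nonneg hb hk) (mul_nonneg hc hk), ← add_mul]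
  exact ENNReal.ofReal_le_ofReal (mul_le_mul_of_nonneg_right habc hk)

theorem lintegral_posPart_increment_le [MeasurableAdd G] [MeasurableSub₂ G]
    [μ.IsAddRightInvariant] [SFinite μ] {J u : G → ℝ} (hJm : Measurable J)
    (hJ0 : ∀ x, 0 ≤ J x) (hJeven : ∀ x, J (-x) = J x)
    (hJ1 : ∫⁻ x, ENNReal.ofReal (J x) ∂μ = 1) (hu : AEMeasurable u μ) (h : G) :
    ∫⁻ x, ENNReal.ofReal (max (u (x + h) - u x) 0) ∂μ ≤
      mollifiedIncrement μ J u h + mollifiedIncrement μ J u 0 := by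
  have hmeas : ∀ {f g : G × G → ℝ},
      AEMeasurable f (μ.prod μ) → AEMeasurable g (μ.prod μ) →
      AEMeasurable (fun p => ENNReal.ofReal (max (f p - g p) 0 * J (p.2 - p.1))) (μ.prod μ) :=
    fun hf hg => ENNReal.measurable_ofReal.comp_aemeasurable <|
      ((hf.sub hg).max aemeasurable_const).mul
        (hJm.comp (measurable_snd.sub measurable_fst)).aemeasurable
  have hu_shift : AEMeasurable (fun x => u (x + h)) μ :=
    hu.comp_quasiMeasurePreserving (measurePreserving_add_right μ h).quasiMeasurePreserving
  have hA := hmeas hu_shift.comp_fst hu.comp_snd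
  have hB := hmeas hu.comp_snd hu.comp_fst
  calc ∫⁻ x, ENNReal.ofReal (max (u (x + h) - u x) 0) ∂μ
      = ∫⁻ x, ∫⁻ y, ENNReal.ofReal (max (u (x + h) - u x) 0 * J (y - x)) ∂μ ∂μ :=
        lintegral_congr fun x =>
          (lintegral_ofReal_mul_comp_sub_right hJ1 (le_max_right _ _) x).symm
    _ ≤ ∫⁻ x, ∫⁻ y, (ENNReal.ofReal (max (u (x + h) - u y) 0 * J (y - x)) +
          ENNReal.ofReal (max (u y - u x) 0 * J (y - x))) ∂μ ∂μ :=
        lintegral_mono fun x => lintegral_mono fun y => ofReal_mul_le_add_of_le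
          (le_max_right _ _) (le_max_right _ _) (hJ0 _) (max_sub_zero_le_add _ _ _)
    _ = ∫⁻ x, ∫⁻ y, ENNReal.ofReal (max (u (x + h) - u y) 0 * J (y - x)) ∂μ ∂μ +
          ∫⁻ x, ∫⁻ y, ENNReal.ofReal (max (u y - u x) 0 * J (y - x)) ∂μ ∂μ := by
        rw [← lintegral_prod _ hA, ← lintegral_prod _ hB, ← lintegral_add_left' hA]
        exact (lintegral_prod _ (hA.add hB)).symm
    _ = mollifiedIncrement μ J u h + mollifiedIncrement μ J u 0 := by
        rw [lintegral_lintegral_swap hA]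
        simp only [mollifiedIncrement, add_zero]
        congr with y
        congr with x
        rw [← neg_sub x y, hJeven]

end Mollifier

theorem stmt7_general (d : ℕ) (θ C : ℝ) (hC : 0 ≤ C)
    (J : EuclideanSpace ℝ (Fin d) → ℝ) (hJm : Measurable J)
    (hJ0 : ∀ x, 0 ≤ J x) (hJeven : ∀ x, J (-x) = J x)
    (hJ1 : ∫ x, J x = 1)
    (u : EuclideanSpace ℝ (Fin d) → ℝ) (hu : Integrable u)
    (hmoll : ∀ z : EuclideanSpace ℝ (Fin d), ‖z‖ ≤ θ →
      (∫⁻ x, ∫⁻ y, ENNReal.ofReal (max (u (y + z) - u x) 0 * J (y - x))) ≤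
        ENNReal.ofReal C)
    (h : EuclideanSpace ℝ (Fin d)) (hh : ‖h‖ ≤ θ) :
    ∫ x, max (u (x + h) - u x) 0 ≤ 2 * C := by
  have hJint : Integrable J := Integrable.of_integral_ne_zero (by rw [hJ1]; exact one_ne_zero)
  have hJ1' : ∫⁻ x, ENNReal.ofReal (J x) = 1 := by
    rw [← ofReal_integral_eq_lintegral_ofReal hJint (ae_of_all _ hJ0), hJ1, ENNReal.ofReal_one]
  have h0 : ‖(0 : EuclideanSpace ℝ (Fin d))‖ ≤ θ :=
    norm_zero.trans_le ((norm_nonneg h).trans hh)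
  rw [integral_eq_lintegral_of_nonneg_ae (f := fun x => max (u (x + h) - u x) 0)
    (ae_of_all _ fun x => le_max_right _ _)
    ((hu.comp_add_right h).sub hu).pos_part.aestronglyMeasurable]
  refine ENNReal.toReal_le_of_le_ofReal (by positivity) ?_
  calc _ ≤ mollifiedIncrement volume J u h + mollifiedIncrement volume J u 0 :=
        lintegral_posPart_increment_le hJm hJ0 hJeven hJ1' hu.aemeasurable h
    _ ≤ ENNReal.ofReal C + ENNReal.ofReal C := add_le_add (hmoll h hh) (hmoll 0 h0)
    _ = ENNReal.ofReal (2 * C) := by rw [← ENNReal.ofReal_add hC hC, two_mul]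

/-- Converse direction of the equivalence at the end of Theorem 5.1: if the
mollified doubled-variable increment bound holds with constant `C` for all shifts
of size at most `θ`, then the translation form holds with constant `2C` for all
shifts of size at most `θ`. -/
theorem stmt7 (d : ℕ) (hd : 1 ≤ d) (θ C : ℝ) (hθ : 0 < θ) (hC : 0 ≤ C)
    (J : EuclideanSpace ℝ (Fin d) → ℝ) (hJm : Measurable J)
    (hJ0 : ∀ x, 0 ≤ J x) (hJeven : ∀ x, J (-x) = J x)
    (hJsupp : ∀ x, x ∉ Metric.closedBall (0 : EuclideanSpace ℝ (Fin d)) θ → J x = 0)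
    (hJ1 : ∫ x, J x = 1)
    (u : EuclideanSpace ℝ (Fin d) → ℝ) (hu : Integrable u)
    (hmoll : ∀ z : EuclideanSpace ℝ (Fin d), ‖z‖ ≤ θ →
      (∫⁻ x, ∫⁻ y, ENNReal.ofReal (max (u (y + z) - u x) 0 * J (y - x))) ≤
        ENNReal.ofReal C)
    (h : EuclideanSpace ℝ (Fin d)) (hh : ‖h‖ ≤ θ) :
    ∫ x, max (u (x + h) - u x) 0 ≤ 2 * C :=
  stmt7_general d θ C hC J hJm hJ0 hJeven hJ1 u hu hmoll h hh
end

section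
/- Let d ≥ 1 and let 𝕋ᵈ denote the d-dimensional torus (Fin d → AddCircle 1) equipped with its translation-invariant Haar probability measure. Let ρ > 0, λ > 0, and L, K, S ≥ 0. Let σ, τ : ℝ → ℝ be measurable with |σ(a) − σ(b)| ≤ L|a − b|^λ for all a, b ∈ ℝ and |τ(r) − σ(r)| ≤ S for all r ∈ ℝ. Let m : ℝ → [0,∞) be measurable with m(r) ≤ K/ρ for all r and m(r) = 0 whenever |r| > ρ. Let u, v : 𝕋ᵈ → ℝ be measurable and let J : 𝕋ᵈ → [0,∞) be measurable with ∫_{𝕋ᵈ} J = 1. Then ∫_{𝕋ᵈ}∫_{𝕋ᵈ} (τ(v(y)) − σ(u(x)))² m(v(y) − u(x)) J(y − x) dy dx ≤ 2K(S² + L²ρ^{2λ})/ρ. -/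
/-!
On the support `|v y - u x| ≤ ρ` of `m`, splitting `τ(v y) - σ(u x)` through `σ(v y)` and using
`(a + b)² ≤ 2(a² + b²)` bounds the integrand by `2(S² + L²ρ^{2λ}) · (K/ρ) · J(y - x)`. By translation
invariance of the Haar measure the inner integral of `J(· - x)` is `1`, and the outer integral of a
constant against a probability measure is that constant.
-/

open MeasureTheory

instance : IsProbabilityMeasure (volume : Measure (AddCircle (1 : ℝ))) :=
  ⟨by rw [AddCircle.measure_univ, ENNReal.ofReal_one]⟩

section Pointwise

variable {σ τ m : ℝ → ℝ} {L S M lam ρ a b : ℝ}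

lemma sq_sub_le_of_holder_of_abs_sub_le (hL : 0 ≤ L) (hlam : 0 ≤ lam)
    (hσ : ∀ a b : ℝ, |σ a - σ b| ≤ L * |a - b| ^ lam) (hτσ : ∀ r : ℝ, |τ r - σ r| ≤ S)
    (hab : |b - a| ≤ ρ) :
    (τ b - σ a) ^ 2 ≤ 2 * (S ^ 2 + L ^ 2 * ρ ^ (2 * lam)) := by
  have hρ : 0 ≤ ρ := (abs_nonneg _).trans hab
  have hτ : (τ b - σ b) ^ 2 ≤ S ^ 2 := by
    rw [← sq_abs]
    exact pow_le_pow_left₀ (abs_nonneg _) (hτσ b) 2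
  have hσ' : (σ b - σ a) ^ 2 ≤ L ^ 2 * ρ ^ (2 * lam) := by
    have hle : |σ b - σ a| ≤ L * ρ ^ lam := (hσ b a).trans (by gcongr)
    rw [← sq_abs, mul_comm 2 lam, Real.rpow_mul hρ, Real.rpow_two, ← mul_pow]
    exact pow_le_pow_left₀ (abs_nonneg _) hle 2
  calc (τ b - σ a) ^ 2 = ((τ b - σ b) + (σ b - σ a)) ^ 2 := by ring
    _ ≤ 2 * ((τ b - σ b) ^ 2 + (σ b - σ a) ^ 2) := add_sq_le
    _ ≤ 2 * (S ^ 2 + L ^ 2 * ρ ^ (2 * lam)) := by gcongr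

lemma sq_sub_mul_le_of_holder (hρ : 0 ≤ ρ) (hL : 0 ≤ L) (hlam : 0 ≤ lam)
    (hσ : ∀ a b : ℝ, |σ a - σ b| ≤ L * |a - b| ^ lam) (hτσ : ∀ r : ℝ, |τ r - σ r| ≤ S)
    (hm0 : ∀ r : ℝ, 0 ≤ m r) (hmM : ∀ r : ℝ, m r ≤ M) (hmsupp : ∀ r : ℝ, ρ < |r| → m r = 0) :
    (τ b - σ a) ^ 2 * m (b - a) ≤ 2 * (S ^ 2 + L ^ 2 * ρ ^ (2 * lam)) * M := by
  rcases le_or_gt |b - a| ρ with hab | hab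
  · exact mul_le_mul (sq_sub_le_of_holder_of_abs_sub_le hL hlam hσ hτσ hab) (hmM _) (hm0 _)
      (by positivity)
  · have hM : 0 ≤ M := (hm0 0).trans (hmM 0)
    rw [hmsupp _ hab, mul_zero]
    positivity

end Pointwise

section Translation

variable {G : Type*} [AddGroup G] [MeasurableSpace G] [MeasurableAdd G] {μ : Measure G}
  [μ.IsAddRightInvariant] {J : G → ℝ} {C : ℝ}

lemma integral_le_of_le_mul_sub {f : G → ℝ} (x : G) (hf0 : ∀ y, 0 ≤ f y)
    (hfJ : ∀ y, f y ≤ C * J (y - x)) (hJ1 : ∫ y, J y ∂μ = 1) :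
    ∫ y, f y ∂μ ≤ C := by
  have hJ : Integrable J μ := .of_integral_ne_zero (by rw [hJ1]; exact one_ne_zero)
  calc ∫ y, f y ∂μ ≤ ∫ y, C * J (y - x) ∂μ :=
        integral_mono_of_nonneg (.of_forall hf0) ((hJ.comp_sub_right x).const_mul C)
          (.of_forall hfJ)
    _ = C := by rw [integral_const_mul, integral_sub_right_eq_self J x, hJ1, mul_one]

lemma integral_integral_le_of_le_mul_sub [IsProbabilityMeasure μ] {F : G → G → ℝ}
    (hF0 : ∀ x y, 0 ≤ F x y) (hFJ : ∀ x y, F x y ≤ C * J (y - x)) (hJ1 : ∫ y, J y ∂μ = 1) :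
    ∫ x, ∫ y, F x y ∂μ ∂μ ≤ C := by
  calc ∫ x, ∫ y, F x y ∂μ ∂μ ≤ ∫ _, C ∂μ :=
        integral_mono_of_nonneg (.of_forall fun x ↦ integral_nonneg (hF0 x)) (integrable_const C)
          (.of_forall fun x ↦ integral_le_of_le_mul_sub x (hF0 x) (hFJ x) hJ1)
    _ = C := by simp

end Translation

theorem stmt10_general (d : ℕ) (ρ lam L K S : ℝ)
    (hρ : 0 < ρ) (hlam : 0 < lam) (hL : 0 ≤ L)
    (σ τ : ℝ → ℝ)
    (hσ : ∀ a b : ℝ, |σ a - σ b| ≤ L * |a - b| ^ lam)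
    (hτσ : ∀ r : ℝ, |τ r - σ r| ≤ S)
    (m : ℝ → ℝ) (hm0 : ∀ r : ℝ, 0 ≤ m r)
    (hmK : ∀ r : ℝ, m r ≤ K / ρ) (hmsupp : ∀ r : ℝ, ρ < |r| → m r = 0)
    (u v : (Fin d → AddCircle (1 : ℝ)) → ℝ)
    (J : (Fin d → AddCircle (1 : ℝ)) → ℝ)
    (hJ0 : ∀ x, 0 ≤ J x) (hJ1 : ∫ x, J x = 1) :
    ∫ x, ∫ y, (τ (v y) - σ (u x)) ^ 2 * m (v y - u x) * J (y - x) ≤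
      2 * K * (S ^ 2 + L ^ 2 * ρ ^ (2 * lam)) / ρ := by
  calc ∫ x, ∫ y, (τ (v y) - σ (u x)) ^ 2 * m (v y - u x) * J (y - x)
      ≤ 2 * (S ^ 2 + L ^ 2 * ρ ^ (2 * lam)) * (K / ρ) := by
        refine integral_integral_le_of_le_mul_sub (fun x y ↦ ?_) (fun x y ↦ ?_) hJ1
        · have := hm0 (v y - u x)
          have := hJ0 (y - x)
          positivity
        · exact mul_le_mul_of_nonneg_right
            (sq_sub_mul_le_of_holder hρ.le hL hlam.le hσ hτσ hm0 hmK hmsupp) (hJ0 _)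
    _ = 2 * K * (S ^ 2 + L ^ 2 * ρ ^ (2 * lam)) / ρ := by ring

/-- Deterministic core of the Itô-correction-term estimate (Proposition 3.2(iii))
on the torus `𝕋ᵈ = (Fin d → AddCircle 1)` with its Haar probability measure:
if `σ` is `λ`-Hölder with constant `L`, `‖τ - σ‖_∞ ≤ S`, `0 ≤ m ≤ K/ρ` is
supported in `[-ρ, ρ]`, and `J ≥ 0` has unit mass, then
`∫∫ (τ(v(y)) - σ(u(x)))² m(v(y) - u(x)) J(y - x) ≤ 2K(S² + L²ρ^{2λ})/ρ`. -/
theorem stmt10 (d : ℕ) (hd : 1 ≤ d) (ρ lam L K S : ℝ)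
    (hρ : 0 < ρ) (hlam : 0 < lam) (hL : 0 ≤ L) (hK : 0 ≤ K) (hS : 0 ≤ S)
    (σ τ : ℝ → ℝ) (hσm : Measurable σ) (hτm : Measurable τ)
    (hσ : ∀ a b : ℝ, |σ a - σ b| ≤ L * |a - b| ^ lam)
    (hτσ : ∀ r : ℝ, |τ r - σ r| ≤ S)
    (m : ℝ → ℝ) (hmm : Measurable m) (hm0 : ∀ r : ℝ, 0 ≤ m r)
    (hmK : ∀ r : ℝ, m r ≤ K / ρ) (hmsupp : ∀ r : ℝ, ρ < |r| → m r = 0)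
    (u v : (Fin d → AddCircle (1 : ℝ)) → ℝ)
    (hum : Measurable u) (hvm : Measurable v)
    (J : (Fin d → AddCircle (1 : ℝ)) → ℝ) (hJm : Measurable J)
    (hJ0 : ∀ x, 0 ≤ J x) (hJ1 : ∫ x, J x = 1) :
    ∫ x, ∫ y, (τ (v y) - σ (u x)) ^ 2 * m (v y - u x) * J (y - x) ≤
      2 * K * (S ^ 2 + L ^ 2 * ρ ^ (2 * lam)) / ρ :=
  stmt10_general d ρ lam L K S hρ hlam hL σ τ hσ hτσ m hm0 hmK hmsupp u v J hJ0 hJ1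
end
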